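/- For all n ≥ 0, ∑_{k=0}^n js(n,k;z) y^k = ∏_{i=0}^{n-1} (y + i(z+i)) as polynomials in y and z. -/

import Mathlib

open Polynomial Finset

/-- The Jacobi-Stirling numbers of the first kind `js(n,k;z)`, as polynomials in `z`. -/
noncomputable def js : ℕ → ℕ → Polynomial ℤ
  | 0, 0 => 1
  | 0, _+1 => 0
  | _+1, 0 => 0
  | n+1, k+1 => js n k + (C (n : ℤ) * (C (n : ℤ) + X)) * js n (k+1)

/-! The product `∏ (y + aᵢ)` has coefficients `eₙ,ₖ` obeying `eₙ₊₁,ₖ₊₁ = eₙ,ₖ + aₙ eₙ,ₖ₊₁` and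
`eₙ₊₁,₀ = aₙ eₙ,₀`. The Jacobi-Stirling recurrence is this one with `aₙ = n(n+z)`; its boundary
condition `js(n+1,0;z) = 0` matches because `a₀ = 0`. Comparing coefficients proves the identity. -/

theorem js_eq_zero_of_lt : ∀ {n k : ℕ}, n < k → js n k = 0
  | 0, _+1, _ => rfl
  | n+1, k+1, h => by
    rw [js, js_eq_zero_of_lt (by omega), js_eq_zero_of_lt (by omega), mul_zero, add_zero]

theorem js_succ_zero (n : ℕ) : js (n + 1) 0 = C (n : ℤ) * (C (n : ℤ) + X) * js n 0 := by
  cases n <;> simp [js]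

theorem js_succ_succ (n k : ℕ) :
    js (n + 1) (k + 1) = js n k + C (n : ℤ) * (C (n : ℤ) + X) * js n (k + 1) :=
  rfl

section

variable {R : Type*} [CommSemiring R]

theorem coeff_X_add_C_mul_zero (a : R) (p : R[X]) : ((X + C a) * p).coeff 0 = a * p.coeff 0 := by
  simp [add_mul]

theorem coeff_X_add_C_mul_succ (a : R) (p : R[X]) (k : ℕ) :
    ((X + C a) * p).coeff (k + 1) = p.coeff k + a * p.coeff (k + 1) := by
  simp [add_mul]

end

theorem coeff_prod_X_add_C_eq_js (n k : ℕ) :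
    (∏ i ∈ range n, ((X : (Polynomial ℤ)[X]) + C (C (i : ℤ) * (X + C (i : ℤ))))).coeff k =
      js n k := by
  induction n generalizing k with
  | zero => cases k <;> simp [js, coeff_one]
  | succ n ih =>
    rw [prod_range_succ, mul_comm]
    cases k with
    | zero => rw [coeff_X_add_C_mul_zero, ih, js_succ_zero]; ring
    | succ k => rw [coeff_X_add_C_mul_succ, ih, ih, js_succ_succ]; ring

/-- `∑_{k=0}^n js(n,k;z) y^k = ∏_{i=0}^{n-1} (y + i(z+i))`, as polynomials in `y`
with coefficients in `ℤ[z]`. -/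
theorem sum_js_eq_prod (n : ℕ) :
    ∑ k ∈ Finset.range (n + 1), C (js n k) * (X : Polynomial (Polynomial ℤ)) ^ k =
      ∏ i ∈ Finset.range n,
        ((X : Polynomial (Polynomial ℤ)) + C (C (i : ℤ) * (Polynomial.X + C (i : ℤ)))) := by
  set P := ∏ i ∈ Finset.range n,
    ((X : Polynomial (Polynomial ℤ)) + C (C (i : ℤ) * (Polynomial.X + C (i : ℤ))))
  have hdeg : P.natDegree < n + 1 := Nat.lt_succ_of_le <|
    natDegree_le_iff_coeff_eq_zero.mpr fun k hk => by
      rw [coeff_prod_X_add_C_eq_js, js_eq_zero_of_lt hk]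
  rw [as_sum_range_C_mul_X_pow' P hdeg]
  simp only [P, coeff_prod_X_add_C_eq_js]
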